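/- arXiv:1603.05576 — 2 statements merged into one kernel-verified Lean document; each statement's English description precedes it below -/
import Mathlib

section
/- Let 0 < ρ < 1 and ε = ε_Λ(√(ρ(1−ρ)/(1+ρ))). If ε < 1/2, then the Kullback–Leibler divergence of the mixture density from the bivariate Gaussian density satisfies D(f_{X̄,Ȳ} ‖ f_{X,Y}) = ∫_{ℝ²} f_{X̄,Ȳ}(x,y) · ln( f_{X̄,Ȳ}(x,y) / f_{X,Y}(x,y) ) dx dy ≤ ln(1 + 4ε). -/
open Real

/-- The centered Gaussian density with standard deviation `σ`. -/
noncomputable def gpdf (σ x : ℝ) : ℝ :=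
  (1 / (Real.sqrt (2 * Real.pi) * σ)) * Real.exp (-(x ^ 2) / (2 * σ ^ 2))

/-- The discrete Gaussian distribution over the lattice `Λ = bℤ` with parameter `σ`,
evaluated at the lattice point `b * k`. -/
noncomputable def dgauss (b σ : ℝ) (k : ℤ) : ℝ :=
  gpdf σ (b * k) / ∑' j : ℤ, gpdf σ (b * j)

/-- The flatness factor of the lattice `Λ = bℤ` at parameter `σ`. -/
noncomputable def flatness (b σ : ℝ) : ℝ :=
  ⨆ x : ℝ, |b * (∑' k : ℤ, gpdf σ (x - b * k)) - 1|

/-- The bivariate Gaussian density with unit variances and correlation `ρ`. -/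
noncomputable def fXY (ρ x y : ℝ) : ℝ :=
  (1 / (2 * Real.pi * Real.sqrt (1 - ρ ^ 2))) *
    Real.exp (-(x ^ 2 + y ^ 2 - 2 * ρ * x * y) / (2 * (1 - ρ ^ 2)))

/-- The density of `(W̄ + √(1-ρ)N₁, W̄ + √(1-ρ)N₂)` where `W̄ ~ D_{Λ,√ρ}`, `Λ = bℤ`. -/
noncomputable def fXbarYbar (ρ b x y : ℝ) : ℝ :=
  ∑' k : ℤ, dgauss b (Real.sqrt ρ) k * gpdf (Real.sqrt (1 - ρ)) (x - b * k) *
    gpdf (Real.sqrt (1 - ρ)) (y - b * k)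

/-!
Completing the square, each summand of the mixture is `f_{X,Y}(x, y)` times a Gaussian of variance
`ρ(1-ρ)/(1+ρ)` evaluated at `ρ(x+y)/(1+ρ) - bk`. Hence `f_{X̄,Ȳ} = f_{X,Y} · θ(ρ(x+y)/(1+ρ)) / Z`,
where `θ` is the `b`-periodization of that Gaussian and `Z = ∑ₖ f_{√ρ}(bk)`. The flatness factor
gives `b θ ≤ 1 + ε`, and Poisson summation gives `b Z = ∑ₙ exp(-2π²ρn²/b²) ≥ 1`, so
`f_{X̄,Ȳ} ≤ (1 + ε) f_{X,Y}` pointwise. Integrating `log (f_{X̄,Ȳ} / f_{X,Y}) ≤ log (1 + 4ε)` against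
the probability density `f_{X̄,Ȳ}` gives the bound.
-/

open MeasureTheory

lemma gpdf_pos {σ : ℝ} (hσ : 0 < σ) (x : ℝ) : 0 < gpdf σ x := by
  unfold gpdf; positivity

lemma gpdf_nonneg {σ : ℝ} (hσ : 0 ≤ σ) (x : ℝ) : 0 ≤ gpdf σ x := by
  unfold gpdf; positivity

lemma gpdf_neg (σ x : ℝ) : gpdf σ (-x) = gpdf σ x := by
  simp [gpdf]

lemma gpdf_eq_mul_exp (σ x : ℝ) :
    gpdf σ x = (√(2 * π) * σ)⁻¹ * exp (-(2 * σ ^ 2)⁻¹ * x ^ 2) := by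
  rw [gpdf, one_div, neg_mul, neg_div, div_eq_inv_mul]

lemma integral_gpdf {σ : ℝ} (hσ : 0 < σ) : ∫ x, gpdf σ x = 1 := by
  have hsqrt : √(π / (2 * σ ^ 2)⁻¹) = √(2 * π) * σ := by
    rw [div_inv_eq_mul, show π * (2 * σ ^ 2) = 2 * π * σ ^ 2 by ring, sqrt_mul (by positivity),
      sqrt_sq hσ.le]
  simp_rw [gpdf_eq_mul_exp σ]
  rw [integral_const_mul, integral_gaussian, hsqrt, inv_mul_cancel₀ (by positivity)]

lemma flatness_nonneg (b σ : ℝ) : 0 ≤ flatness b σ :=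
  Real.iSup_nonneg fun _ => abs_nonneg _

lemma mul_log_div_le_mul_log {a c M : ℝ} (ha : 0 ≤ a) (hc : 0 < c) (h : a ≤ M * c) :
    a * log (a / c) ≤ a * log M := by
  rcases ha.eq_or_lt with rfl | ha
  · simp
  · exact mul_le_mul_of_nonneg_left (log_le_log (div_pos ha hc) ((div_le_iff₀ hc).2 h)) ha.le

lemma integral_tsum_mul_mul_prod {ι α β : Type*} [Countable ι] [MeasurableSpace α]
    [MeasurableSpace β] {μ : Measure α} {ν : Measure β} [SFinite μ] [SFinite ν] {w : ι → ℝ}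
    {s : ℝ} (hw : HasSum w s) {f : ι → α → ℝ} {g : ι → β → ℝ} (hf0 : ∀ i x, 0 ≤ f i x)
    (hg0 : ∀ i y, 0 ≤ g i y) (hf : ∀ i, ∫ x, f i x ∂μ = 1) (hg : ∀ i, ∫ y, g i y ∂ν = 1) :
    ∫ p, ∑' i, w i * f i p.1 * g i p.2 ∂μ.prod ν = s := by
  have hint (i : ι) : Integrable (fun p => w i * f i p.1 * g i p.2) (μ.prod ν) := by
    simp_rw [mul_assoc]
    exact ((Integrable.of_integral_ne_zero (by simp [hf i])).mul_prod
      (Integrable.of_integral_ne_zero (by simp [hg i]))).const_mul (w i)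
  have hintegral (c : ℝ) (i : ι) : ∫ p, c * f i p.1 * g i p.2 ∂μ.prod ν = c := by
    simp_rw [mul_assoc, integral_const_mul, integral_prod_mul, hf, hg, mul_one]
  have hnorm (i : ι) : ∫ p, ‖w i * f i p.1 * g i p.2‖ ∂μ.prod ν = |w i| := by
    simp_rw [norm_mul, norm_of_nonneg (hf0 _ _), norm_of_nonneg (hg0 _ _), norm_eq_abs]
    exact hintegral _ i
  rw [← integral_tsum_of_summable_integral_norm hint
      (hw.summable.abs.congr fun i => (hnorm i).symm),
    tsum_congr fun i => hintegral (w i) i, hw.tsum_eq]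

section Periodization

variable {σ b : ℝ}

-- Shaped to match `summable_pow_mul_jacobiTheta₂_term_bound`.
noncomputable def gpdfMajorant (σ b S : ℝ) (k : ℤ) : ℝ :=
  (√(2 * π) * σ)⁻¹ * exp (-π * (b ^ 2 / (2 * σ ^ 2 * π) * k ^ 2 - 2 * S * |(k : ℝ)|))

lemma summable_gpdfMajorant (hσ : 0 < σ) (hb : b ≠ 0) (S : ℝ) :
    Summable (gpdfMajorant σ b S) := by
  unfold gpdfMajorant
  simpa only [pow_zero, one_mul, Int.cast_abs] using (summable_pow_mul_jacobiTheta₂_term_bound S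
    (by positivity : 0 < b ^ 2 / (2 * σ ^ 2 * π)) 0).mul_left (√(2 * π) * σ)⁻¹

lemma gpdf_sub_mul_int_le_gpdfMajorant (hσ : 0 < σ) {x S : ℝ}
    (hS : |x * b| ≤ 2 * σ ^ 2 * π * S) (k : ℤ) :
    gpdf σ (x - b * k) ≤ gpdfMajorant σ b S k := by
  have hxbk : x * b * k ≤ |x * b| * |(k : ℝ)| := by
    rw [← abs_mul]; exact le_abs_self _
  have hexp : -π * (b ^ 2 / (2 * σ ^ 2 * π) * k ^ 2 - 2 * S * |(k : ℝ)|) =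
      -(2 * σ ^ 2)⁻¹ * (b ^ 2 * k ^ 2 - 4 * σ ^ 2 * π * S * |(k : ℝ)|) := by
    field_simp; ring
  rw [gpdf_eq_mul_exp, gpdfMajorant, hexp]
  refine mul_le_mul_of_nonneg_left (exp_le_exp.2 ?_) (by positivity)
  rw [neg_mul, neg_mul, neg_le_neg_iff]
  refine mul_le_mul_of_nonneg_left ?_ (by positivity)
  nlinarith [mul_le_mul_of_nonneg_right hS (abs_nonneg (k : ℝ)), sq_nonneg x]

lemma summable_gpdf_sub_mul_int (hσ : 0 < σ) (hb : b ≠ 0) (x : ℝ) :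
    Summable fun k : ℤ => gpdf σ (x - b * k) :=
  (summable_gpdfMajorant hσ hb _).of_nonneg_of_le (fun k => (gpdf_pos hσ _).le)
    (gpdf_sub_mul_int_le_gpdfMajorant hσ (S := |x * b| / (2 * σ ^ 2 * π)) (by field_simp; rfl))

lemma summable_gpdf_mul_int (hσ : 0 < σ) (hb : b ≠ 0) :
    Summable fun j : ℤ => gpdf σ (b * j) := by
  simpa [gpdf_neg] using summable_gpdf_sub_mul_int hσ hb 0

lemma tsum_gpdf_mul_int_pos (hσ : 0 < σ) (hb : b ≠ 0) :
    0 < ∑' j : ℤ, gpdf σ (b * j) :=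
  (summable_gpdf_mul_int hσ hb).tsum_pos (fun _ => (gpdf_pos hσ _).le) 0 (gpdf_pos hσ _)

lemma hasSum_dgauss (hσ : 0 < σ) (hb : b ≠ 0) : HasSum (dgauss b σ) 1 := by
  have := ((summable_gpdf_mul_int hσ hb).div_const (∑' j : ℤ, gpdf σ (b * j))).hasSum
  rwa [tsum_div_const, div_self (tsum_gpdf_mul_int_pos hσ hb).ne'] at this

lemma tsum_gpdf_sub_mul_int_sub_mul (x : ℝ) (n : ℤ) :
    ∑' k : ℤ, gpdf σ (x - b * n - b * k) = ∑' k : ℤ, gpdf σ (x - b * k) := by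
  rw [← (Equiv.addRight n).tsum_eq fun k : ℤ => gpdf σ (x - b * k)]
  refine tsum_congr fun k => congrArg (gpdf σ) ?_
  push_cast [Equiv.coe_addRight]
  ring

lemma bddAbove_tsum_gpdf_sub_mul_int (hσ : 0 < σ) (hb : 0 < b) :
    BddAbove (Set.range fun x => ∑' k : ℤ, gpdf σ (x - b * k)) := by
  refine ⟨∑' k : ℤ, gpdfMajorant σ b (b ^ 2 / (2 * σ ^ 2 * π)) k,
    Set.forall_mem_range.2 fun x => ?_⟩
  -- By periodicity it suffices to bound the sum at `x - b⌊x/b⌋ ∈ [0, b)`.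
  have hy0 := Int.sub_floor_div_mul_nonneg x hb
  have hylt := Int.sub_floor_div_mul_lt x hb
  rw [mul_comm] at hy0 hylt
  have hyb : |(x - b * ⌊x / b⌋) * b| ≤ 2 * σ ^ 2 * π * (b ^ 2 / (2 * σ ^ 2 * π)) := by
    rw [mul_div_cancel₀ _ (by positivity), abs_of_nonneg (mul_nonneg hy0 hb.le), sq]
    exact mul_le_mul_of_nonneg_right hylt.le hb.le
  rw [← tsum_gpdf_sub_mul_int_sub_mul x ⌊x / b⌋]
  exact (summable_gpdf_sub_mul_int hσ hb.ne' _).tsum_le_tsum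
    (gpdf_sub_mul_int_le_gpdfMajorant hσ hyb) (summable_gpdfMajorant hσ hb.ne' _)

lemma mul_tsum_gpdf_sub_mul_int_le (hσ : 0 < σ) (hb : 0 < b) (x : ℝ) :
    b * ∑' k : ℤ, gpdf σ (x - b * k) ≤ 1 + flatness b σ := by
  obtain ⟨M, hM⟩ := bddAbove_tsum_gpdf_sub_mul_int hσ hb
  have hbdd : BddAbove (Set.range fun x => |b * ∑' k : ℤ, gpdf σ (x - b * k) - 1|) := by
    refine ⟨b * M + 1, Set.forall_mem_range.2 fun x => abs_le.2 ⟨?_, ?_⟩⟩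
    all_goals
      have : 0 ≤ ∑' k : ℤ, gpdf σ (x - b * k) := tsum_nonneg fun k => (gpdf_pos hσ _).le
      have := hM (Set.mem_range_self x)
      nlinarith
  have := (le_abs_self _).trans (le_ciSup hbdd x)
  unfold flatness
  linarith

lemma one_le_mul_tsum_gpdf_mul_int (hσ : 0 < σ) (hb : 0 < b) :
    1 ≤ b * ∑' j : ℤ, gpdf σ (b * j) := by
  set a := b ^ 2 / (2 * π * σ ^ 2) with ha_def
  have ha : 0 < a := by positivity
  have hterm (j : ℤ) : gpdf σ (b * j) = (√(2 * π) * σ)⁻¹ * exp (-π * a * j ^ 2) := by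
    rw [gpdf_eq_mul_exp, ha_def]
    congr 2
    field_simp
  have hsqrt : a ^ (1 / 2 : ℝ) = b / (√(2 * π) * σ) := by
    rw [← sqrt_eq_rpow, ha_def, sqrt_div' _ (by positivity), sqrt_mul (by positivity),
      sqrt_sq hσ.le, sqrt_sq hb.le]
  have hpoisson : b * ∑' j : ℤ, gpdf σ (b * j) = ∑' n : ℤ, exp (-π / a * n ^ 2) := by
    rw [tsum_congr hterm, tsum_mul_left, tsum_exp_neg_mul_int_sq ha, hsqrt]
    field_simp
  have hsummable : Summable fun n : ℤ => exp (-π / a * n ^ 2) := by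
    simpa [div_eq_mul_inv, mul_comm, mul_left_comm] using
      summable_pow_mul_jacobiTheta₂_term_bound 0 (inv_pos.2 ha) 0
  rw [hpoisson]
  simpa using hsummable.le_tsum 0 fun j _ => (exp_pos _).le

end Periodization

lemma gpdf_mul_gpdf_mul_gpdf {ρ : ℝ} (hρ0 : 0 < ρ) (hρ1 : ρ < 1) (x y t : ℝ) :
    gpdf (√ρ) t * gpdf (√(1 - ρ)) (x - t) * gpdf (√(1 - ρ)) (y - t) =
      fXY ρ x y * gpdf (√(ρ * (1 - ρ) / (1 + ρ))) (ρ * (x + y) / (1 + ρ) - t) := by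
  have h1mρ : 0 < 1 - ρ := by linarith
  have h1pρ : 0 < 1 + ρ := by linarith
  have hconst : 1 / (√(2 * π) * √ρ) * (1 / (√(2 * π) * √(1 - ρ))) * (1 / (√(2 * π) * √(1 - ρ))) =
      1 / (2 * π * √(1 - ρ ^ 2)) * (1 / (√(2 * π) * √(ρ * (1 - ρ) / (1 + ρ)))) := by
    rw [show 1 - ρ ^ 2 = (1 - ρ) * (1 + ρ) by ring, sqrt_mul h1mρ.le, sqrt_div' _ h1pρ.le,
      sqrt_mul hρ0.le]
    have : 0 < √(1 + ρ) := sqrt_pos.2 h1pρ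
    have : 0 < √(1 - ρ) := sqrt_pos.2 h1mρ
    have : 0 < √ρ := sqrt_pos.2 hρ0
    have : 0 < √(2 * π) := sqrt_pos.2 (by positivity)
    field_simp
    rw [sq_sqrt (by positivity)]
  have hexp : -t ^ 2 / (2 * ρ) + -(x - t) ^ 2 / (2 * (1 - ρ)) + -(y - t) ^ 2 / (2 * (1 - ρ)) =
      -(x ^ 2 + y ^ 2 - 2 * ρ * x * y) / (2 * (1 - ρ ^ 2)) +
        -(ρ * (x + y) / (1 + ρ) - t) ^ 2 / (2 * (ρ * (1 - ρ) / (1 + ρ))) := by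
    have : 0 < 1 - ρ ^ 2 := by nlinarith
    field_simp
    ring
  simp only [gpdf, fXY, sq_sqrt hρ0.le, sq_sqrt h1mρ.le,
    sq_sqrt (by positivity : 0 ≤ ρ * (1 - ρ) / (1 + ρ))]
  calc _ = 1 / (√(2 * π) * √ρ) * (1 / (√(2 * π) * √(1 - ρ))) * (1 / (√(2 * π) * √(1 - ρ))) *
        exp (-t ^ 2 / (2 * ρ) + -(x - t) ^ 2 / (2 * (1 - ρ)) + -(y - t) ^ 2 / (2 * (1 - ρ))) := by
        rw [exp_add, exp_add]; ring
    _ = _ := by rw [hconst, hexp, exp_add]; ring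

section Mixture

variable {ρ b : ℝ}

lemma fXY_pos (hρ : ρ ^ 2 < 1) (x y : ℝ) : 0 < fXY ρ x y := by
  have : 0 < √(1 - ρ ^ 2) := sqrt_pos.2 (by linarith)
  unfold fXY
  positivity

lemma fXbarYbar_eq (hρ0 : 0 < ρ) (hρ1 : ρ < 1) (x y : ℝ) :
    fXbarYbar ρ b x y = fXY ρ x y *
      (∑' k : ℤ, gpdf (√(ρ * (1 - ρ) / (1 + ρ))) (ρ * (x + y) / (1 + ρ) - b * k)) /
        ∑' j : ℤ, gpdf (√ρ) (b * j) := by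
  simp_rw [fXbarYbar, dgauss, div_mul_eq_mul_div, gpdf_mul_gpdf_mul_gpdf hρ0 hρ1, tsum_div_const,
    tsum_mul_left]

lemma fXbarYbar_nonneg (ρ b x y : ℝ) : 0 ≤ fXbarYbar ρ b x y :=
  tsum_nonneg fun _ => mul_nonneg (mul_nonneg (div_nonneg (gpdf_nonneg (sqrt_nonneg ρ) _)
    (tsum_nonneg fun _ => gpdf_nonneg (sqrt_nonneg ρ) _)) (gpdf_nonneg (sqrt_nonneg _) _))
    (gpdf_nonneg (sqrt_nonneg _) _)

lemma fXbarYbar_le (hb : 0 < b) (hρ0 : 0 < ρ) (hρ1 : ρ < 1) (x y : ℝ) :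
    fXbarYbar ρ b x y ≤ (1 + flatness b √(ρ * (1 - ρ) / (1 + ρ))) * fXY ρ x y := by
  set σ := √(ρ * (1 - ρ) / (1 + ρ))
  have hσ : 0 < σ := sqrt_pos.2 (div_pos (mul_pos hρ0 (by linarith)) (by linarith))
  have hZ := tsum_gpdf_mul_int_pos (sqrt_pos.2 hρ0) hb.ne'
  have htheta : ∑' k : ℤ, gpdf σ (ρ * (x + y) / (1 + ρ) - b * k) ≤
      (1 + flatness b σ) * ∑' j : ℤ, gpdf (√ρ) (b * j) := by
    refine le_of_mul_le_mul_left ?_ hb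
    calc b * ∑' k : ℤ, gpdf σ (ρ * (x + y) / (1 + ρ) - b * k) ≤ 1 + flatness b σ :=
          mul_tsum_gpdf_sub_mul_int_le hσ hb _
      _ ≤ (1 + flatness b σ) * (b * ∑' j : ℤ, gpdf (√ρ) (b * j)) :=
          le_mul_of_one_le_right (by linarith [flatness_nonneg b σ])
            (one_le_mul_tsum_gpdf_mul_int (sqrt_pos.2 hρ0) hb)
      _ = b * ((1 + flatness b σ) * ∑' j : ℤ, gpdf (√ρ) (b * j)) := by ring
  rw [fXbarYbar_eq hρ0 hρ1, div_le_iff₀ hZ, mul_assoc, mul_left_comm]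
  exact mul_le_mul_of_nonneg_left htheta (fXY_pos (by nlinarith) x y).le

lemma integral_fXbarYbar (hb : b ≠ 0) (hρ0 : 0 < ρ) (hρ1 : ρ < 1) :
    ∫ p : ℝ × ℝ, fXbarYbar ρ b p.1 p.2 = 1 := by
  have hσ : 0 < √(1 - ρ) := sqrt_pos.2 (by linarith)
  rw [Measure.volume_eq_prod]
  exact integral_tsum_mul_mul_prod (hasSum_dgauss (sqrt_pos.2 hρ0) hb)
    (f := fun k x => gpdf √(1 - ρ) (x - b * k)) (g := fun k y => gpdf √(1 - ρ) (y - b * k))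
    (fun k x => (gpdf_pos hσ _).le) (fun k y => (gpdf_pos hσ _).le)
    (fun k => by rw [integral_sub_right_eq_self (gpdf _), integral_gpdf hσ])
    (fun k => by rw [integral_sub_right_eq_self (gpdf _), integral_gpdf hσ])

end Mixture

theorem kl_divergence_le_general (ρ b : ℝ) (hb : 0 < b) (hρ0 : 0 < ρ) (hρ1 : ρ < 1) :
    ∫ p : ℝ × ℝ, fXbarYbar ρ b p.1 p.2 * Real.log (fXbarYbar ρ b p.1 p.2 / fXY ρ p.1 p.2) ≤
      Real.log (1 + 4 * flatness b (Real.sqrt (ρ * (1 - ρ) / (1 + ρ)))) := by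
  set ε := flatness b √(ρ * (1 - ρ) / (1 + ρ))
  have hε : 0 ≤ ε := flatness_nonneg _ _
  have hdensity := integral_fXbarYbar hb.ne' hρ0 hρ1
  have hpointwise (p : ℝ × ℝ) :
      fXbarYbar ρ b p.1 p.2 * log (fXbarYbar ρ b p.1 p.2 / fXY ρ p.1 p.2) ≤
        fXbarYbar ρ b p.1 p.2 * log (1 + 4 * ε) := by
    have hfXY := fXY_pos (by nlinarith : ρ ^ 2 < 1) p.1 p.2
    refine mul_log_div_le_mul_log (fXbarYbar_nonneg ρ b p.1 p.2) hfXY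
      ((fXbarYbar_le hb hρ0 hρ1 p.1 p.2).trans ?_)
    gcongr
    linarith
  -- A non-integrable integrand has integral `0 ≤ log (1 + 4ε)`.
  by_cases hint : Integrable fun p : ℝ × ℝ =>
      fXbarYbar ρ b p.1 p.2 * log (fXbarYbar ρ b p.1 p.2 / fXY ρ p.1 p.2)
  · calc _ ≤ ∫ p : ℝ × ℝ, fXbarYbar ρ b p.1 p.2 * log (1 + 4 * ε) :=
          integral_mono hint
            ((Integrable.of_integral_ne_zero (by simp [hdensity])).mul_const _) hpointwise
      _ = log (1 + 4 * ε) := by rw [integral_mul_const, hdensity, one_mul]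
  · rw [integral_undef hint]
    exact log_nonneg (by linarith)

/-- if `ε = ε_Λ(√(ρ(1-ρ)/(1+ρ))) < 1/2`, then the Kullback–Leibler divergence
of the mixture density from the bivariate Gaussian density is at most `ln(1 + 4ε)`. -/
theorem kl_divergence_le (ρ b : ℝ) (hb : 0 < b) (hρ0 : 0 < ρ) (hρ1 : ρ < 1)
    (hε : flatness b (Real.sqrt (ρ * (1 - ρ) / (1 + ρ))) < 1 / 2) :
    ∫ p : ℝ × ℝ, fXbarYbar ρ b p.1 p.2 * Real.log (fXbarYbar ρ b p.1 p.2 / fXY ρ p.1 p.2) ≤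
      Real.log (1 + 4 * flatness b (Real.sqrt (ρ * (1 - ρ) / (1 + ρ)))) :=
  kl_divergence_le_general ρ b hb hρ0 hρ1
end

section
/- (Wyner common information of the doubly symmetric binary source, point G.) Let a₁ ∈ (0, 1/2). Let W, Z₁, Z₂ be jointly independent Boolean random variables with W uniform and Z₁, Z₂ ~ Bernoulli(a₁), and define X = W ⊕ Z₁, Y = W ⊕ Z₂. Then (i) X and Y are conditionally independent given W; (ii) (X,Y) is a doubly symmetric binary source with P(X ≠ Y) = a₀ where a₀ = 2a₁(1−a₁), i.e. P(X = x, Y = y) = (1−a₀)/2 if x = y and a₀/2 otherwise; and (iii) the mutual information in nats equals I[(X,Y) : W] = ln 2 + h(a₀) − 2h(a₁), where h(p) = −p ln p − (1−p) ln(1−p). -/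
open MeasureTheory ProbabilityTheory

/-- Shannon entropy (in nats) of a finite-valued random variable `X` under `μ`. -/
noncomputable def measEnt {Ω α : Type*} [MeasurableSpace Ω] [Fintype α]
    (μ : Measure Ω) (X : Ω → α) : ℝ :=
  ∑ a : α, Real.negMulLog ((μ (X ⁻¹' {a})).toReal)

/-- Shannon mutual information `I[X : Y]` (in nats). -/
noncomputable def measMI {Ω α β : Type*} [MeasurableSpace Ω] [Fintype α] [Fintype β]
    (μ : Measure Ω) (X : Ω → α) (Y : Ω → β) : ℝ :=
  measEnt μ X + measEnt μ Y - measEnt μ (fun ω => (X ω, Y ω))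

/-- Conditional Shannon entropy `H[X | Y]` (in nats). -/
noncomputable def measCondEnt {Ω α β : Type*} [MeasurableSpace Ω] [Fintype α] [Fintype β]
    (μ : Measure Ω) (X : Ω → α) (Y : Ω → β) : ℝ :=
  measEnt μ (fun ω => (X ω, Y ω)) - measEnt μ Y

/-- Conditional Shannon mutual information `I[X : Y | Z]` (in nats). -/
noncomputable def measCondMI {Ω α β γ : Type*} [MeasurableSpace Ω] [Fintype α] [Fintype β]
    [Fintype γ] (μ : Measure Ω) (X : Ω → α) (Y : Ω → β) (Z : Ω → γ) : ℝ :=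
  measEnt μ (fun ω => (X ω, Z ω)) + measEnt μ (fun ω => (Y ω, Z ω)) -
    measEnt μ (fun ω => (X ω, Y ω, Z ω)) - measEnt μ Z

/-- The binary entropy function in nats. -/
noncomputable def binEnt (p : ℝ) : ℝ :=
  -(p * Real.log p) - (1 - p) * Real.log (1 - p)

/-! The atoms of `((X, Y), W)` are the atoms of `((Z₁, Z₂), W)` relabelled by the bijection
`((z₁, z₂), w) ↦ ((w ⊕ z₁, w ⊕ z₂), w)`, so independence factorises them: this gives (i) at once
and (ii) after summing over `w`. Entropy is invariant under the relabelling and additive over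
independent variables, so `H[(X, Y), W] = H[Z₁] + H[Z₂] + H[W]` and the mutual information is
`H[X, Y] − H[Z₁] − H[Z₂]`, where `H[X, Y] = ln 2 + h(a₀)` is read off from (ii). -/

open Real

def bernoulliMass (a : ℝ) (b : Bool) : ℝ := if b then a else 1 - a

lemma bernoulliMass_nonneg {a : ℝ} (ha₀ : 0 ≤ a) (ha₁ : a ≤ 1) (b : Bool) :
    0 ≤ bernoulliMass a b := by
  cases b <;> simp [bernoulliMass] <;> linarith

lemma binEnt_eq_negMulLog_add (p : ℝ) : binEnt p = negMulLog p + negMulLog (1 - p) := by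
  simp only [binEnt, negMulLog]; ring

lemma sum_negMulLog_bernoulliMass (a : ℝ) : ∑ b, negMulLog (bernoulliMass a b) = binEnt a := by
  simp [bernoulliMass, binEnt_eq_negMulLog_add]

lemma negMulLog_div_two (x : ℝ) : negMulLog (x / 2) = negMulLog x / 2 + x * log 2 / 2 := by
  rw [div_eq_mul_inv, negMulLog_mul]; simp only [negMulLog, Real.log_inv]; ring

lemma sum_negMulLog_symmetricPair (p : ℝ) :
    ∑ xy : Bool × Bool, negMulLog (if xy.1 = xy.2 then (1 - p) / 2 else p / 2) =
      log 2 + binEnt p := by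
  simp only [Fintype.sum_prod_type, Fintype.sum_bool, Bool.true_eq_false, Bool.false_eq_true,
    ↓reduceIte, negMulLog_div_two, binEnt_eq_negMulLog_add]
  ring

lemma sum_bernoulliMass_xor_mul (a : ℝ) (x y : Bool) :
    ∑ w, bernoulliMass a (xor x w) * bernoulliMass a (xor y w) * (1 / 2) =
      if x = y then (1 - 2 * a * (1 - a)) / 2 else 2 * a * (1 - a) / 2 := by
  cases x <;> cases y <;> simp [bernoulliMass] <;> ring

section Entropy

variable {Ω α β : Type*} [MeasurableSpace Ω] {μ : Measure Ω}

lemma measure_preimage_singleton_eq_bernoulliMass [IsProbabilityMeasure μ] {Z : Ω → Bool}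
    (hZ : Measurable Z) {a : ℝ} (ha : 0 ≤ a) (h : μ (Z ⁻¹' {true}) = ENNReal.ofReal a)
    (b : Bool) : μ (Z ⁻¹' {b}) = ENNReal.ofReal (bernoulliMass a b) := by
  cases b
  · have hcompl : Z ⁻¹' {false} = (Z ⁻¹' {true})ᶜ := by ext; simp
    rw [hcompl, prob_compl_eq_one_sub (hZ (measurableSet_singleton true)), h, bernoulliMass,
      if_neg Bool.false_ne_true, ENNReal.ofReal_sub _ ha, ENNReal.ofReal_one]
  · exact h

lemma measure_eq_sum_measure_preimage_singleton_inter [Fintype β] [MeasurableSpace β]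
    [MeasurableSingletonClass β] {W : Ω → β} (hW : Measurable W) (s : Set Ω) :
    μ s = ∑ b, μ (W ⁻¹' {b} ∩ s) := by
  have hfib : ∀ b, MeasurableSet (W ⁻¹' {b}) := fun b => hW (measurableSet_singleton b)
  simp_rw [← Measure.restrict_apply (hfib _)]
  rw [sum_measure_preimage_singleton _ fun b _ => hfib b, Finset.coe_univ, Set.preimage_univ,
    Measure.restrict_apply_univ]

lemma sum_toReal_measure_preimage_singleton [IsProbabilityMeasure μ] [Fintype α]
    [MeasurableSpace α] [MeasurableSingletonClass α] {X : Ω → α} (hX : Measurable X) :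
    ∑ a, (μ (X ⁻¹' {a})).toReal = 1 := by
  rw [← ENNReal.toReal_sum fun a _ => measure_ne_top μ _,
    sum_measure_preimage_singleton _ fun a _ => hX (measurableSet_singleton a), Finset.coe_univ,
    Set.preimage_univ, measure_univ, ENNReal.toReal_one]

lemma measEnt_eq_sum_negMulLog [Fintype α] {X : Ω → α} {p : α → ℝ} (hp : ∀ a, 0 ≤ p a)
    (hX : ∀ a, μ (X ⁻¹' {a}) = ENNReal.ofReal (p a)) :
    measEnt μ X = ∑ a, negMulLog (p a) := by
  simp only [measEnt, hX, ENNReal.toReal_ofReal (hp _)]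

lemma measEnt_of_bernoulli [IsProbabilityMeasure μ] {Z : Ω → Bool} (hZ : Measurable Z) {a : ℝ}
    (ha₀ : 0 ≤ a) (ha₁ : a ≤ 1) (h : μ (Z ⁻¹' {true}) = ENNReal.ofReal a) :
    measEnt μ Z = binEnt a := by
  rw [measEnt_eq_sum_negMulLog (bernoulliMass_nonneg ha₀ ha₁)
    (measure_preimage_singleton_eq_bernoulliMass hZ ha₀ h), sum_negMulLog_bernoulliMass]

lemma measEnt_comp_equiv [Fintype α] [Fintype β] (e : α ≃ β) (X : Ω → α) :
    measEnt μ (e ∘ X) = measEnt μ X := by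
  refine (Fintype.sum_equiv e _ _ fun a => ?_).symm
  rw [Set.preimage_comp, ← Set.image_singleton, e.injective.preimage_image]

lemma ProbabilityTheory.IndepFun.measure_preimage_prodMk_singleton [MeasurableSpace α]
    [MeasurableSpace β] [MeasurableSingletonClass α] [MeasurableSingletonClass β]
    {X : Ω → α} {Y : Ω → β} (h : IndepFun X Y μ) (a : α) (b : β) :
    μ ((fun ω => (X ω, Y ω)) ⁻¹' {(a, b)}) = μ (X ⁻¹' {a}) * μ (Y ⁻¹' {b}) := by
  rw [← Set.singleton_prod_singleton, Set.mk_preimage_prod]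
  exact h.measure_inter_preimage_eq_mul _ _ (measurableSet_singleton a) (measurableSet_singleton b)

lemma ProbabilityTheory.IndepFun.measEnt_prodMk [IsProbabilityMeasure μ] [Fintype α] [Fintype β]
    [MeasurableSpace α] [MeasurableSpace β] [MeasurableSingletonClass α]
    [MeasurableSingletonClass β] {X : Ω → α} {Y : Ω → β} (hX : Measurable X) (hY : Measurable Y)
    (h : IndepFun X Y μ) :
    measEnt μ (fun ω => (X ω, Y ω)) = measEnt μ X + measEnt μ Y := by
  simp only [measEnt, Fintype.sum_prod_type, h.measure_preimage_prodMk_singleton,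
    ENNReal.toReal_mul, negMulLog_mul, Finset.sum_add_distrib, ← Finset.mul_sum, ← Finset.sum_mul,
    sum_toReal_measure_preimage_singleton hX, sum_toReal_measure_preimage_singleton hY, one_mul]

end Entropy

lemma xor_eq_and_eq_iff (a b x w : Bool) : (xor a b = x ∧ a = w) ↔ (b = xor x w ∧ a = w) := by
  decide +revert

lemma xor_eq_and_xor_eq_and_eq_iff (a b c x y w : Bool) :
    (xor a b = x ∧ xor a c = y ∧ a = w) ↔ ((b = xor x w ∧ c = xor y w) ∧ a = w) := by
  decide +revert

def xorShift : Equiv.Perm ((Bool × Bool) × Bool) :=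
  Function.Involutive.toPerm (fun p => ((xor p.2 p.1.1, xor p.2 p.1.2), p.2)) fun _ => by simp

section XorChannel

variable {Ω : Type*} [MeasurableSpace Ω] {μ : Measure Ω} {W Z₁ Z₂ : Ω → Bool}

lemma measure_xor_eq_and_eq (h : IndepFun Z₁ W μ) (x w : Bool) :
    μ {ω | xor (W ω) (Z₁ ω) = x ∧ W ω = w} = μ (Z₁ ⁻¹' {xor x w}) * μ (W ⁻¹' {w}) := by
  rw [← h.measure_preimage_prodMk_singleton]
  congr 1
  ext ω
  simpa only [Set.mem_ofPred_eq, Set.mem_preimage, Set.mem_singleton_iff, Prod.mk.injEq] using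
    xor_eq_and_eq_iff (W ω) (Z₁ ω) x w

lemma measure_xor_xor_eq_and_eq (hZ : IndepFun Z₁ Z₂ μ)
    (hZW : IndepFun (fun ω => (Z₁ ω, Z₂ ω)) W μ) (x y w : Bool) :
    μ {ω | xor (W ω) (Z₁ ω) = x ∧ xor (W ω) (Z₂ ω) = y ∧ W ω = w} =
      μ (Z₁ ⁻¹' {xor x w}) * μ (Z₂ ⁻¹' {xor y w}) * μ (W ⁻¹' {w}) := by
  rw [← hZ.measure_preimage_prodMk_singleton, ← hZW.measure_preimage_prodMk_singleton]
  congr 1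
  ext ω
  simpa only [Set.mem_ofPred_eq, Set.mem_preimage, Set.mem_singleton_iff, Prod.mk.injEq] using
    xor_eq_and_xor_eq_and_eq_iff (W ω) (Z₁ ω) (Z₂ ω) x y w

lemma measure_xor_xor_eq (hW : Measurable W) (hZ : IndepFun Z₁ Z₂ μ)
    (hZW : IndepFun (fun ω => (Z₁ ω, Z₂ ω)) W μ) {a : ℝ} (ha₀ : 0 ≤ a) (ha₁ : a ≤ 1)
    (hWlaw : ∀ w, μ (W ⁻¹' {w}) = ENNReal.ofReal (1 / 2))
    (hZ₁law : ∀ z, μ (Z₁ ⁻¹' {z}) = ENNReal.ofReal (bernoulliMass a z))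
    (hZ₂law : ∀ z, μ (Z₂ ⁻¹' {z}) = ENNReal.ofReal (bernoulliMass a z)) (x y : Bool) :
    μ {ω | xor (W ω) (Z₁ ω) = x ∧ xor (W ω) (Z₂ ω) = y} =
      ENNReal.ofReal (if x = y then (1 - 2 * a * (1 - a)) / 2 else 2 * a * (1 - a) / 2) := by
  have hr := bernoulliMass_nonneg ha₀ ha₁
  rw [measure_eq_sum_measure_preimage_singleton_inter hW, ← sum_bernoulliMass_xor_mul,
    ENNReal.ofReal_sum_of_nonneg fun w _ => by positivity [hr (xor x w), hr (xor y w)]]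
  refine Finset.sum_congr rfl fun w _ => ?_
  rw [Set.inter_comm, show {ω | xor (W ω) (Z₁ ω) = x ∧ xor (W ω) (Z₂ ω) = y} ∩ W ⁻¹' {w} =
      {ω | xor (W ω) (Z₁ ω) = x ∧ xor (W ω) (Z₂ ω) = y ∧ W ω = w} from Set.ext fun _ => and_assoc,
    measure_xor_xor_eq_and_eq hZ hZW, hWlaw, hZ₁law, hZ₂law,
    ENNReal.ofReal_mul (mul_nonneg (hr _) (hr _)), ENNReal.ofReal_mul (hr _)]

lemma measEnt_xor_xor_prodMk [IsProbabilityMeasure μ] (hW : Measurable W) (hZ₁ : Measurable Z₁)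
    (hZ₂ : Measurable Z₂) (hZ : IndepFun Z₁ Z₂ μ) (hZW : IndepFun (fun ω => (Z₁ ω, Z₂ ω)) W μ) :
    measEnt μ (fun ω => ((xor (W ω) (Z₁ ω), xor (W ω) (Z₂ ω)), W ω)) =
      measEnt μ Z₁ + measEnt μ Z₂ + measEnt μ W := by
  rw [show (fun ω => ((xor (W ω) (Z₁ ω), xor (W ω) (Z₂ ω)), W ω)) =
      xorShift ∘ fun ω => ((Z₁ ω, Z₂ ω), W ω) from rfl, measEnt_comp_equiv,
    hZW.measEnt_prodMk (hZ₁.prodMk hZ₂) hW, hZ.measEnt_prodMk hZ₁ hZ₂]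

end XorChannel

/-- Wyner common information of the DSBS, point G: with `W` uniform and
`Z₁, Z₂ ~ Ber(a₁)` jointly independent, `X = W ⊕ Z₁`, `Y = W ⊕ Z₂`, `a₀ = 2a₁(1−a₁)`:
(i) `X` and `Y` are conditionally independent given `W`; (ii) `(X,Y)` is a doubly
symmetric binary source with `P(X = x, Y = y) = (1−a₀)/2` if `x = y` and `a₀/2` otherwise;
(iii) `I[(X,Y) : W] = ln 2 + h(a₀) − 2h(a₁)` in nats. -/
theorem wyner_common_information_DSBS {Ω : Type*} [MeasurableSpace Ω] (μ : Measure Ω)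
    [IsProbabilityMeasure μ] (a₁ : ℝ) (ha₁0 : 0 < a₁) (ha₁ : a₁ < 1 / 2)
    (W Z₁ Z₂ : Ω → Bool) (hWm : Measurable W) (hZ₁m : Measurable Z₁)
    (hZ₂m : Measurable Z₂)
    (hindep : iIndepFun ![W, Z₁, Z₂] μ)
    (hW : μ (W ⁻¹' {true}) = 1 / 2)
    (hZ₁ : μ (Z₁ ⁻¹' {true}) = ENNReal.ofReal a₁)
    (hZ₂ : μ (Z₂ ⁻¹' {true}) = ENNReal.ofReal a₁) :
    let X : Ω → Bool := fun ω => xor (W ω) (Z₁ ω)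
    let Y : Ω → Bool := fun ω => xor (W ω) (Z₂ ω)
    let a₀ : ℝ := 2 * a₁ * (1 - a₁)
    -- (i) conditional independence of `X` and `Y` given `W`:
    (∀ x y w : Bool,
        μ {ω | X ω = x ∧ Y ω = y ∧ W ω = w} * μ {ω | W ω = w} =
          μ {ω | X ω = x ∧ W ω = w} * μ {ω | Y ω = y ∧ W ω = w}) ∧
      -- (ii) `(X,Y)` is a doubly symmetric binary source with crossover `a₀`:
      (∀ x y : Bool,
        μ {ω | X ω = x ∧ Y ω = y} =
          ENNReal.ofReal (if x = y then (1 - a₀) / 2 else a₀ / 2)) ∧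
      -- (iii) the Wyner common information at point G:
      measMI μ (fun ω => (X ω, Y ω)) W = Real.log 2 + binEnt a₀ - 2 * binEnt a₁ := by
  intro X Y a₀
  have hmeas : ∀ i, Measurable (![W, Z₁, Z₂] i) := fun i => by fin_cases i <;> assumption
  have hZ : IndepFun Z₁ Z₂ μ := hindep.indepFun (i := 1) (j := 2) (by decide)
  have hZ₁W : IndepFun Z₁ W μ := hindep.indepFun (i := 1) (j := 0) (by decide)
  have hZ₂W : IndepFun Z₂ W μ := hindep.indepFun (i := 2) (j := 0) (by decide)
  have hZW : IndepFun (fun ω => (Z₁ ω, Z₂ ω)) W μ :=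
    hindep.indepFun_prodMk hmeas 1 2 0 (by decide) (by decide)
  have hW' : μ (W ⁻¹' {true}) = ENNReal.ofReal (1 / 2) := by
    rw [hW, ENNReal.ofReal_div_of_pos two_pos, ENNReal.ofReal_one, ENNReal.ofReal_ofNat]
  have hWlaw (w : Bool) : μ (W ⁻¹' {w}) = ENNReal.ofReal (1 / 2) := by
    rw [measure_preimage_singleton_eq_bernoulliMass hWm (by norm_num) hW' w]
    cases w <;> norm_num [bernoulliMass]
  have hZ₁law := measure_preimage_singleton_eq_bernoulliMass hZ₁m ha₁0.le hZ₁
  have hZ₂law := measure_preimage_singleton_eq_bernoulliMass hZ₂m ha₁0.le hZ₂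
  have hXY := measure_xor_xor_eq hWm hZ hZW ha₁0.le (by linarith) hWlaw hZ₁law hZ₂law
  refine ⟨fun x y w => ?_, hXY, ?_⟩
  · change _ * μ (W ⁻¹' {w}) = _
    rw [measure_xor_xor_eq_and_eq hZ hZW, measure_xor_eq_and_eq hZ₁W, measure_xor_eq_and_eq hZ₂W]
    ring
  · have ha₀ : 0 ≤ a₀ ∧ a₀ ≤ 1 := ⟨mul_nonneg (by positivity) (by linarith), by nlinarith⟩
    rw [measMI, measEnt_xor_xor_prodMk hWm hZ₁m hZ₂m hZ hZW,
      measEnt_eq_sum_negMulLog (p := fun xy => if xy.1 = xy.2 then (1 - a₀) / 2 else a₀ / 2)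
        (fun xy => by split_ifs <;> linarith)
        fun xy => by rw [← Set.singleton_prod_singleton, Set.mk_preimage_prod]; exact hXY xy.1 xy.2,
      sum_negMulLog_symmetricPair, measEnt_of_bernoulli hZ₁m ha₁0.le (by linarith) hZ₁,
      measEnt_of_bernoulli hZ₂m ha₁0.le (by linarith) hZ₂]
    ring
end
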